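/- arXiv:math/9805150 — 5 statements merged into one kernel-verified Lean document; each statement's English description precedes it below -/
import Mathlib

section
/- For all natural numbers k and e there exists a natural number N such that for every regressive coloring c of the e-element subsets of {1,2,...,N} (i.e., c(x) < min x for every e-element subset x) there exists a subset B of {1,2,...,N} of size k that is min-homogeneous for c (i.e., for all e-element subsets x of B the color c(x) depends only on min x). -/
/-!
Every regressive colouring of the `e`-sets of an infinite `S ⊆ ℕ` has an infinite min-homogeneous
set. Thin out `S` one element at a time, as in Ramsey's argument: the least element `a` of the
current set colours the `(e - 1)`-sets `y` above it by `c (insert a y) < a`, so infinite Ramsey for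
`e - 1` with finitely many colours yields an infinite subset above `a` on which this colour is
constant. The resulting sequence `a₀ < a₁ < ⋯` is min-homogeneous; the same sequence with a
pigeonhole step on the colours of the `aᵢ` proves infinite Ramsey for `e` itself.

The finite statement follows by compactness: if every `[1, N]` carried a counterexample `C N`, their
limit along a nonprincipal ultrafilter would be regressive on `[1, ∞)`, and a `k`-subset of an
infinite min-homogeneous set for the limit would be min-homogeneous for some `C N`.
-/

open Set Filter

def IsRegressiveOn (c : Finset ℕ → ℕ) (e : ℕ) (S : Set ℕ) : Prop :=
  ∀ x : Finset ℕ, ↑x ⊆ S → x.card = e → ∀ hx : x.Nonempty, c x < x.min' hx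

def IsMinHomogeneous {α : Type*} (c : Finset ℕ → α) (e : ℕ) (B : Set ℕ) : Prop :=
  ∀ x y : Finset ℕ, ↑x ⊆ B → ↑y ⊆ B → x.card = e → y.card = e → x.min = y.min → c x = c y

namespace IsMinHomogeneous

variable {α : Type*} {c c' : Finset ℕ → α} {e : ℕ} {B B' : Set ℕ}

theorem mono (h : IsMinHomogeneous c e B) (hB : B' ⊆ B) : IsMinHomogeneous c e B' :=
  fun x y hx hy => h x y (hx.trans hB) (hy.trans hB)

theorem congr (h : IsMinHomogeneous c e B)
    (hcc' : ∀ x : Finset ℕ, ↑x ⊆ B → x.card = e → x.Nonempty → c x = c' x) :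
    IsMinHomogeneous c' e B := by
  intro x y hx hy hxe hye hxy
  rcases x.eq_empty_or_nonempty with rfl | hxne
  · obtain rfl : y = ∅ := Finset.card_eq_zero.mp (hye.trans hxe.symm)
    rfl
  have hyne : y.Nonempty := Finset.card_pos.mp (hye ▸ hxe ▸ hxne.card_pos)
  rw [← hcc' x hx hxe hxne, ← hcc' y hy hye hyne]
  exact h x y hx hy hxe hye hxy

end IsMinHomogeneous

theorem insert_subset_and_card_of_subset_Ioi {a : ℕ} {y : Finset ℕ} {S : Set ℕ} (ha : a ∈ S)
    (hy : ↑y ⊆ S ∩ Ioi a) : ↑(insert a y) ⊆ S ∧ (insert a y).card = y.card + 1 := by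
  rw [Finset.coe_insert]
  exact ⟨insert_subset ha (hy.trans inter_subset_left),
    Finset.card_insert_of_notMem fun h => lt_irrefl a (hy h).2⟩

theorem Ultrafilter.exists_eventually_eq_of_finite {ι α : Type*} {U : Ultrafilter ι} {f : ι → α}
    {s : Set α} (hs : s.Finite) (h : ∀ᶠ i in U, f i ∈ s) : ∃ v ∈ s, ∀ᶠ i in U, f i = v := by
  obtain ⟨v, hv, hU⟩ := Ultrafilter.eq_pure_of_finite_mem hs (Ultrafilter.mem_map.mpr h)
  have hv_mem : {v} ∈ U.map f := by
    rw [hU]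
    exact Ultrafilter.mem_pure.mpr rfl
  exact ⟨v, hv, Ultrafilter.mem_map.mp hv_mem⟩

theorem exists_strictMono_insert_eq {α : Type*} {c : Finset ℕ → α} {e : ℕ} {S : Set ℕ}
    (hS : S.Infinite)
    (step : ∀ a ∈ S, ∀ T ⊆ S ∩ Ioi a, T.Infinite → ∃ T' ⊆ T, T'.Infinite ∧
      ∃ v, ∀ y : Finset ℕ, ↑y ⊆ T' → y.card = e → c (insert a y) = v) :
    ∃ a : ℕ → ℕ, StrictMono a ∧ (∀ n, a n ∈ S) ∧ ∃ v : ℕ → α,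
      ∀ i (y : Finset ℕ), ↑y ⊆ a '' Ioi i → y.card = e → c (insert (a i) y) = v i := by
  let InfSub := {T : Set ℕ // T ⊆ S ∧ T.Infinite}
  have hthin : ∀ T : InfSub, ∃ T' : InfSub, T'.1 ⊆ T.1 ∩ Ioi (sInf T.1) ∧
      ∃ v, ∀ y : Finset ℕ, ↑y ⊆ T'.1 → y.card = e → c (insert (sInf T.1) y) = v := by
    rintro ⟨T, hTS, hT⟩
    have hTa : (T ∩ Ioi (sInf T)).Infinite := by
      simpa only [sdiff_eq, compl_Iic] using hT.sdiff (finite_Iic (sInf T))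
    obtain ⟨T', hT'T, hT', hv⟩ :=
      step _ (hTS (Nat.sInf_mem hT.nonempty)) _ (inter_subset_inter_left _ hTS) hTa
    exact ⟨⟨T', (hT'T.trans inter_subset_left).trans hTS, hT'⟩, hT'T, hv⟩
  choose next hnext v hv using hthin
  let T : ℕ → InfSub := fun n => Nat.rec (motive := fun _ => InfSub) ⟨S, subset_rfl, hS⟩
    (fun _ T => next T) n
  let a : ℕ → ℕ := fun n => sInf (T n).1
  have ha_mem (n : ℕ) : a n ∈ (T n).1 := Nat.sInf_mem (T n).2.2.nonempty
  have hT_succ (n : ℕ) : (T (n + 1)).1 ⊆ (T n).1 ∩ Ioi (a n) := hnext (T n)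
  have hT_anti : Antitone fun n => (T n).1 :=
    antitone_nat_of_succ_le fun n => (hT_succ n).trans inter_subset_left
  refine ⟨a, strictMono_nat_of_lt_succ fun n => (hT_succ n (ha_mem (n + 1))).2,
    fun n => (T n).2.1 (ha_mem n), fun i => v (T i), fun i y hy hye => hv (T i) y ?_ hye⟩
  rintro _ hb
  obtain ⟨j, hij, rfl⟩ := hy hb
  exact hT_anti (Nat.succ_le_of_lt hij) (ha_mem j)

theorem exists_min_eq_of_subset_image {α : Type*} {c : Finset ℕ → α} {e : ℕ} {a : ℕ → ℕ}
    {v : ℕ → α} (ha : StrictMono a)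
    (hv : ∀ i (y : Finset ℕ), ↑y ⊆ a '' Ioi i → y.card = e → c (insert (a i) y) = v i)
    {I : Set ℕ} {x : Finset ℕ} (hx : ↑x ⊆ a '' I) (hxe : x.card = e + 1) :
    ∃ i ∈ I, x.min = a i ∧ c x = v i := by
  have hne : x.Nonempty := Finset.card_pos.mp (by omega)
  obtain ⟨i, hi, hai⟩ := hx (x.min'_mem hne)
  refine ⟨i, hi, by rw [← Finset.coe_min' hne, hai]; rfl, ?_⟩
  have hrest : ↑(x.erase (a i)) ⊆ a '' Ioi i := by
    intro b hb
    rw [Finset.mem_coe, hai] at hb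
    obtain ⟨j, -, rfl⟩ := hx (Finset.mem_of_mem_erase hb)
    refine ⟨j, ha.lt_iff_lt.mp ?_, rfl⟩
    rw [hai]
    exact Finset.min'_lt_of_mem_erase_min' x hne hb
  have hmem : a i ∈ x := hai ▸ x.min'_mem hne
  rw [← hv i _ hrest (by rw [Finset.card_erase_of_mem hmem, hxe]; rfl), Finset.insert_erase hmem]

theorem exists_infinite_homogeneous {α : Type*} {s : Set α} (hs : s.Finite) :
    ∀ (e : ℕ) {c : Finset ℕ → α} {S : Set ℕ}, S.Infinite →
      (∀ x : Finset ℕ, ↑x ⊆ S → x.card = e → c x ∈ s) →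
      ∃ H ⊆ S, H.Infinite ∧ ∃ v, ∀ x : Finset ℕ, ↑x ⊆ H → x.card = e → c x = v
  | 0, c, S, hS, _ => ⟨S, subset_rfl, hS, c ∅, fun x _ hx => by rw [Finset.card_eq_zero.mp hx]⟩
  | e + 1, c, S, hS, hc => by
    have hc_insert {b : ℕ} (hb : b ∈ S) {y : Finset ℕ} (hy : ↑y ⊆ S ∩ Ioi b) (hye : y.card = e) :
        c (insert b y) ∈ s :=
      let h := insert_subset_and_card_of_subset_Ioi hb hy
      hc _ h.1 (by rw [h.2, hye])
    obtain ⟨a, ha, haS, v, hv⟩ := exists_strictMono_insert_eq hS fun b hb T hT hTinf =>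
      exists_infinite_homogeneous hs e hTinf fun y hy => hc_insert hb (hy.trans hT)
    have hvs (i : ℕ) : v i ∈ s := by
      obtain ⟨y, hy, hye⟩ := ((Ioi_infinite i).image ha.injective.injOn).exists_subset_card_eq e
      rw [← hv i y hy hye]
      refine hc_insert (haS i) (fun b hb => ?_) hye
      obtain ⟨j, hij, rfl⟩ := hy hb
      exact ⟨haS j, ha hij⟩
    obtain ⟨w, hw⟩ : ∃ w, {i | v i = w}.Infinite := by
      by_contra! hfin
      exact infinite_univ ((hs.biUnion fun w _ => hfin w).subset
        fun i _ => mem_biUnion (hvs i) rfl)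
    refine ⟨a '' {i | v i = w}, ?_, hw.image ha.injective.injOn, w, fun x hx hxe => ?_⟩
    · rintro _ ⟨i, -, rfl⟩
      exact haS i
    · obtain ⟨i, hi, -, hxi⟩ := exists_min_eq_of_subset_image ha hv hx hxe
      exact hxi.trans hi

theorem exists_infinite_minHomogeneous {c : Finset ℕ → ℕ} {e : ℕ} {S : Set ℕ}
    (hc : IsRegressiveOn c e S) (hS : S.Infinite) :
    ∃ H ⊆ S, H.Infinite ∧ IsMinHomogeneous c e H := by
  cases e with
  | zero =>
    refine ⟨S, subset_rfl, hS, fun x y _ _ hx hy _ => ?_⟩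
    rw [Finset.card_eq_zero.mp hx, Finset.card_eq_zero.mp hy]
  | succ e =>
    obtain ⟨a, ha, haS, v, hv⟩ := exists_strictMono_insert_eq hS fun b hb T hT hTinf =>
      exists_infinite_homogeneous (finite_Iio b) e hTinf fun y hy hye => by
        obtain ⟨hsub, hcard⟩ := insert_subset_and_card_of_subset_Ioi hb (hy.trans hT)
        exact (hc _ hsub (by rw [hcard, hye]) (Finset.insert_nonempty b y)).trans_le
          (Finset.min'_le _ _ (Finset.mem_insert_self b y))
    refine ⟨range a, range_subset_iff.mpr haS, infinite_range_of_injective ha.injective,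
      fun x y hx hy hxe hye hxy => ?_⟩
    rw [← image_univ] at hx hy
    obtain ⟨i, -, hxi, hcx⟩ := exists_min_eq_of_subset_image ha hv hx hxe
    obtain ⟨j, -, hyj, hcy⟩ := exists_min_eq_of_subset_image ha hv hy hye
    obtain rfl : i = j := ha.injective (by exact_mod_cast hxi.symm.trans (hxy.trans hyj))
    rw [hcx, hcy]

theorem exists_isRegressiveOn_Ici_limit {e : ℕ} (C : ℕ → Finset ℕ → ℕ)
    (hC : ∀ N, IsRegressiveOn (C N) e ↑(Finset.Icc 1 N)) :
    ∃ c, IsRegressiveOn c e (Ici 1) ∧ ∀ t : Finset ℕ, ↑t ⊆ Ici 1 → ∃ N, t ⊆ Finset.Icc 1 N ∧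
      ∀ x ⊆ t, x.card = e → x.Nonempty → C N x = c x := by
  let U := hyperfilter ℕ
  have h_Icc (t : Finset ℕ) (ht : ↑t ⊆ Ici 1) : ∀ᶠ N in U, t ⊆ Finset.Icc 1 N := by
    refine hyperfilter_le_cofinite (Nat.cofinite_eq_atTop ▸ ?_)
    filter_upwards [eventually_ge_atTop (t.sup id)] with N hN b hb
    exact Finset.mem_Icc.mpr ⟨ht hb, (Finset.le_sup (f := id) hb).trans hN⟩
  have h_lim (x : Finset ℕ) (hx : ↑x ⊆ Ici 1) (hxe : x.card = e) (hne : x.Nonempty) :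
      ∃ v ∈ Iio (x.min' hne), ∀ᶠ N in U, C N x = v :=
    Ultrafilter.exists_eventually_eq_of_finite (finite_Iio _)
      ((h_Icc x hx).mono fun N hN => hC N x (Finset.coe_subset.mpr hN) hxe hne)
  choose! c hc_lt hc_eq using h_lim
  refine ⟨c, hc_lt, fun t ht => ?_⟩
  have h_agree : ∀ᶠ N in U, ∀ x ∈ t.powerset, x.card = e → x.Nonempty → C N x = c x :=
    (eventually_all_finset _).mpr fun x hxt => by
      simp only [eventually_imp_distrib_left]
      exact hc_eq x ((Finset.coe_subset.mpr (Finset.mem_powerset.mp hxt)).trans ht)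
  obtain ⟨N, htN, hN⟩ := ((h_Icc t ht).and h_agree).exists
  exact ⟨N, htN, fun x hxt => hN x (Finset.mem_powerset.mpr hxt)⟩

theorem regressive_ramsey (k e : ℕ) :
    ∃ N : ℕ, ∀ c : Finset ℕ → ℕ,
      (∀ x : Finset ℕ, x ⊆ Finset.Icc 1 N → x.card = e →
        ∀ hx : x.Nonempty, c x < x.min' hx) →
      ∃ B : Finset ℕ, B ⊆ Finset.Icc 1 N ∧ B.card = k ∧
        ∀ x y : Finset ℕ, x ⊆ B → y ⊆ B → x.card = e → y.card = e →
          x.min = y.min → c x = c y := by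
  by_contra h_none
  have h_bad (N : ℕ) : ∃ C, IsRegressiveOn C e ↑(Finset.Icc 1 N) ∧
      ∀ B ⊆ Finset.Icc 1 N, B.card = k → ¬IsMinHomogeneous C e ↑B := by
    by_contra! h
    exact h_none ⟨N, h⟩
  choose C hC_reg hC_bad using h_bad
  obtain ⟨c, hc, h_lim⟩ := exists_isRegressiveOn_Ici_limit C hC_reg
  obtain ⟨H, hH, hH_inf, hH_hom⟩ := exists_infinite_minHomogeneous hc (Ici_infinite 1)
  obtain ⟨t, htH, htk⟩ := hH_inf.exists_subset_card_eq k
  obtain ⟨N, htN, hCc⟩ := h_lim t (htH.trans hH)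
  exact hC_bad N t htN htk <| (hH_hom.mono htH).congr fun x hx hxe hne =>
    (hCc x (Finset.coe_subset.mp hx) hxe hne).symm
end

section
/- Let ν(k) denote the least N such that every regressive coloring of the 2-element subsets of {1,2,...,N} admits a min-homogeneous subset of size k. Then ν eventually dominates every primitive recursive function: for every primitive recursive function g : ℕ → ℕ there exists K such that for all k ≥ K, ν(k) > g(k). -/
/-- `ν j` is the least `N` such that every regressive coloring of pairs from
`{1,…,N}` has a min-homogeneous subset of size `j`. -/
noncomputable def nu (j : ℕ) : ℕ :=
  sInf {N : ℕ | ∀ c : ℕ → ℕ → ℕ,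
    (∀ m n, m ∈ Finset.Icc 1 N → n ∈ Finset.Icc 1 N → m < n → c m n < m) →
    ∃ B : Finset ℕ, B ⊆ Finset.Icc 1 N ∧ B.card = j ∧
      ∀ m n n', m ∈ B → n ∈ B → n' ∈ B → m < n → m < n' → c m n = c m n'}

/-!
Color a pair `m < n` by the largest level `l ≤ K` with `F_l m ≤ n` together with the number `t` of
applications of `F_l` that `n` lies above `m`, for the slowed-down hierarchy
`F_{l+1} a = F_l^[a / Q + 1] a`. Because `t ≤ m / Q`, the pair `(t, l)` can be coded by a number
below `m` once `m ≥ Q = 2K + 2`, so the coloring is regressive on `[1, F_K Q)`. If `m < x < y` get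
the same color from `m`, then `x` and `y` lie in the same block `[F_l^[t] m, F_l^[t+1] m)`, which
forces the level of `(x, y)` below `l`. Hence removing the minimum of a min-homogeneous set lowers
all levels, such a set has at most `Q + K` elements, and `ν k ≥ F_K Q` as soon as `k > 3K + 2`.
Finally `F_{2i+1}` dominates the Ackermann function `ack i`, which dominates every primitive
recursive function.
-/

theorem Monotone.iterate_le_of_forall_ge_le {α : Type*} [Preorder α] {f g : α → α} {A a : α}
    (hg : Monotone g) (hf : id ≤ f) (h : ∀ x, A ≤ x → g x ≤ f x) (ha : A ≤ a) (s : ℕ) :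
    g^[s] a ≤ f^[s] a := by
  induction s with
  | zero => rfl
  | succ s ih =>
    rw [Function.iterate_succ_apply', Function.iterate_succ_apply']
    exact (hg ih).trans (h _ (ha.trans (Function.id_le_iterate_of_id_le hf s a)))

theorem Ultrafilter.exists_eventually_eq_of_eventually_lt {α : Type*} (U : Ultrafilter α)
    {f : α → ℕ} {m : ℕ} (h : ∀ᶠ x in U, f x < m) : ∃ v < m, ∀ᶠ x in U, f x = v := by
  have hcover : (⋃ v ∈ Set.Iio m, {x | f x = v}) ∈ U := by
    filter_upwards [h] with x hx
    simpa using hx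
  exact (Ultrafilter.finite_biUnion_mem_iff (Set.finite_Iio m)).1 hcover

theorem five_mul_sq_le_two_pow {n : ℕ} (hn : 10 ≤ n) : 5 * n ^ 2 ≤ 2 ^ n := by
  induction n, hn using Nat.le_induction with
  | base => norm_num
  | succ n hn ih =>
    have h2 : 2 ^ (n + 1) = 2 * 2 ^ n := by ring
    nlinarith

theorem ack_succ_eq_iterate (j a : ℕ) : ack (j + 1) a = (ack j)^[a + 1] 1 := by
  induction a with
  | zero => rw [ack_succ_zero]; rfl
  | succ a ih => rw [ack_succ_succ, ih, Function.iterate_succ_apply' (ack j) (a + 1)]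

theorem Nat.lt_div_add_one_mul_self {Q a : ℕ} (hQ : 0 < Q) (ha : Q * Q ≤ a) :
    a < (a / Q + 1) * (a / Q + 1) := by
  have hQa : Q ≤ a / Q := (Nat.le_div_iff_mul_le hQ).2 ha
  calc a < Q * (a / Q + 1) := Nat.lt_mul_div_succ a hQ
    _ ≤ (a / Q + 1) * (a / Q + 1) := Nat.mul_le_mul_right _ (by omega)

namespace RegressiveRamsey

open Filter Finset

def IsMinHomogeneous (c : ℕ → ℕ → ℕ) (B : Finset ℕ) : Prop :=
  ∀ m n n', m ∈ B → n ∈ B → n' ∈ B → m < n → m < n' → c m n = c m n'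

theorem IsMinHomogeneous.mono {c : ℕ → ℕ → ℕ} {B B' : Finset ℕ} (h : IsMinHomogeneous c B)
    (hB : B' ⊆ B) : IsMinHomogeneous c B' :=
  fun m n n' hm hn hn' => h m n n' (hB hm) (hB hn) (hB hn')

/-- The partition relation `N → (k)²_min`; `nu k` is the least `N` satisfying it. -/
def MinArrows (N k : ℕ) : Prop :=
  ∀ c : ℕ → ℕ → ℕ, (∀ m n, m ∈ Icc 1 N → n ∈ Icc 1 N → m < n → c m n < m) →
    ∃ B : Finset ℕ, B ⊆ Icc 1 N ∧ B.card = k ∧ IsMinHomogeneous c B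

theorem exists_isMinHomogeneous_card_eq (c : ℕ → ℕ → ℕ)
    (hc : ∀ m n, 0 < m → m < n → c m n < m) (k : ℕ) :
    ∃ B : Finset ℕ, (∀ x ∈ B, 0 < x) ∧ B.card = k ∧ IsMinHomogeneous c B := by
  classical
  let U := hyperfilter ℕ
  have hlimit : ∀ m, ∃ v, 0 < m → ∀ᶠ n in U, c m n = v := fun m => by
    by_cases hm : 0 < m
    · obtain ⟨v, -, hv⟩ := U.exists_eventually_eq_of_eventually_lt
        (((eventually_gt_atTop m).filter_mono Nat.hyperfilter_le_atTop).mono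
          fun n hn => hc m n hm hn)
      exact ⟨v, fun _ => hv⟩
    · exact ⟨0, fun h => absurd h hm⟩
  choose v hv using hlimit
  -- every pair `m < n` of the set gets the limit color `v m`
  suffices ∀ k, ∃ B : Finset ℕ, B.card = k ∧ ∀ m ∈ B, 0 < m ∧ ∀ n ∈ B, m < n → c m n = v m by
    obtain ⟨B, hcard, hB⟩ := this k
    exact ⟨B, fun x hx => (hB x hx).1, hcard, fun m n n' hm hn hn' h h' =>
      ((hB m hm).2 n hn h).trans ((hB m hm).2 n' hn' h').symm⟩
  intro k
  induction k with
  | zero => exact ⟨∅, rfl, by simp⟩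
  | succ k ih =>
    obtain ⟨B, hcard, hB⟩ := ih
    have hnext : ∀ᶠ n in U, 0 < n ∧ ∀ m ∈ B, m < n ∧ c m n = v m :=
      ((eventually_gt_atTop 0).filter_mono Nat.hyperfilter_le_atTop).and
        ((eventually_all_finset B).2 fun m hm =>
          ((eventually_gt_atTop m).filter_mono Nat.hyperfilter_le_atTop).and (hv m (hB m hm).1))
    obtain ⟨n, hn0, hn⟩ := hnext.exists
    refine ⟨insert n B, ?_, fun m hm => ?_⟩
    · rw [card_insert_of_notMem fun h => (hn n h).1.false, hcard]
    rcases mem_insert.1 hm with rfl | hmB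
    · refine ⟨hn0, fun x hx hlt => ?_⟩
      rcases mem_insert.1 hx with rfl | hxB
      · exact absurd hlt (lt_irrefl _)
      · exact absurd (hn x hxB).1 hlt.not_gt
    · refine ⟨(hB m hmB).1, fun x hx hlt => ?_⟩
      rcases mem_insert.1 hx with rfl | hxB
      · exact (hn m hmB).2
      · exact (hB m hmB).2 x hxB hlt

/-- Compactness: the pointwise ultralimit of counterexamples on `[1, N]` would be a regressive
coloring of all positive integers without min-homogeneous sets of size `k`. -/
theorem exists_minArrows (k : ℕ) : ∃ N, MinArrows N k := by
  by_contra! hbad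
  unfold MinArrows at hbad
  push Not at hbad
  choose cN hreg hnot using hbad
  let U := hyperfilter ℕ
  have hlimit : ∀ m n, ∃ v, 0 < m → m < n → v < m ∧ ∀ᶠ N in U, cN N m n = v := fun m n => by
    by_cases h : 0 < m ∧ m < n
    · obtain ⟨v, hv, hev⟩ := U.exists_eventually_eq_of_eventually_lt
        (((eventually_ge_atTop n).filter_mono Nat.hyperfilter_le_atTop).mono fun N hN =>
          hreg N m n (mem_Icc.2 ⟨h.1, by omega⟩) (mem_Icc.2 ⟨by omega, hN⟩) h.2)
      exact ⟨v, fun _ _ => ⟨hv, hev⟩⟩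
    · exact ⟨0, fun h1 h2 => absurd ⟨h1, h2⟩ h⟩
  choose cl hcl using hlimit
  obtain ⟨B, hpos, hcard, hB⟩ :=
    exists_isMinHomogeneous_card_eq cl (fun m n h1 h2 => (hcl m n h1 h2).1) k
  have hagree : ∀ᶠ N in U, (∀ x ∈ B, x ≤ N) ∧ ∀ m ∈ B, ∀ n ∈ B, m < n → cN N m n = cl m n := by
    refine ((eventually_all_finset B).2 fun x _ =>
      (eventually_ge_atTop x).filter_mono Nat.hyperfilter_le_atTop).and
      ((eventually_all_finset B).2 fun m hm => (eventually_all_finset B).2 fun n _ => ?_)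
    by_cases hmn : m < n
    · exact (hcl m n (hpos m hm) hmn).2.mono fun N hN _ => hN
    · exact Eventually.of_forall fun N h => absurd h hmn
  obtain ⟨N, hle, hcN⟩ := hagree.exists
  refine hnot N B (fun x hx => mem_Icc.2 ⟨hpos x hx, hle x hx⟩) hcard ?_
  intro m n n' hm hn hn' h h'
  rw [hcN m hm n hn h, hcN m hm n' hn' h']
  exact hB m n n' hm hn hn' h h'

theorem lt_nu_of_forall_card_lt {k N : ℕ} (c : ℕ → ℕ → ℕ)
    (hc : ∀ m n, 0 < m → m < n → c m n < m)
    (hB : ∀ B ⊆ Icc 1 N, IsMinHomogeneous c B → B.card < k) : N < nu k := by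
  by_contra! hle
  obtain ⟨B, hBsub, hcard, hhom⟩ := Nat.sInf_mem (exists_minArrows k) c
    fun m n hm _ hmn => hc m n (mem_Icc.1 hm).1 hmn
  exact (hB B (hBsub.trans (Icc_subset_Icc_right hle)) hhom).ne hcard

def hierarchy (Q : ℕ) : ℕ → ℕ → ℕ
  | 0, a => a + 1
  | j + 1, a => (hierarchy Q j)^[a / Q + 1] a

theorem lt_hierarchy (Q j a : ℕ) : a < hierarchy Q j a := by
  induction j generalizing a with
  | zero => exact a.lt_succ_self
  | succ j ih =>
    exact (ih a).trans_le <|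
      Function.monotone_iterate_of_id_le (fun x => (ih x).le) (Nat.le_add_left 1 (a / Q)) a

theorem id_le_hierarchy (Q j : ℕ) : id ≤ hierarchy Q j := fun a => (lt_hierarchy Q j a).le

theorem hierarchy_le_hierarchy_succ (Q j a : ℕ) : hierarchy Q j a ≤ hierarchy Q (j + 1) a :=
  Function.monotone_iterate_of_id_le (id_le_hierarchy Q j) (Nat.le_add_left 1 (a / Q)) a

theorem hierarchy_mono_level (Q a : ℕ) : Monotone fun j => hierarchy Q j a :=
  monotone_nat_of_le_succ fun j => hierarchy_le_hierarchy_succ Q j a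

theorem hierarchy_monotone (Q : ℕ) : ∀ j, Monotone (hierarchy Q j)
  | 0 => fun _ _ h => Nat.succ_le_succ h
  | j + 1 => fun _ b h => ((hierarchy_monotone Q j).iterate _ h).trans <|
      Function.monotone_iterate_of_id_le (id_le_hierarchy Q j)
        (Nat.succ_le_succ (Nat.div_le_div_right h)) b

theorem hierarchy_comp_le_succ {Q a : ℕ} (hQ : 0 < Q) (ha : Q ≤ a) (j : ℕ) :
    hierarchy Q j (hierarchy Q j a) ≤ hierarchy Q (j + 1) a :=
  Function.monotone_iterate_of_id_le (id_le_hierarchy Q j)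
    (Nat.succ_le_succ (Nat.div_pos ha hQ)) a

theorem add_two_pow_le_hierarchy {Q : ℕ} (hQ : 0 < Q) :
    ∀ j a, Q ≤ a → a + 2 ^ j ≤ hierarchy Q j a
  | 0, _, _ => le_rfl
  | j + 1, a, ha => by
    have h1 := add_two_pow_le_hierarchy hQ j a ha
    have h2 := add_two_pow_le_hierarchy hQ j _ (ha.trans (lt_hierarchy Q j a).le)
    have h3 := hierarchy_comp_le_succ hQ ha j
    rw [pow_succ]
    omega

theorem ack_le_hierarchy (i : ℕ) :
    ∃ C, ∀ Q a, 0 < Q → Q * Q + C ≤ a → ack i a ≤ hierarchy Q (2 * i + 1) a := by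
  induction i with
  | zero => exact ⟨0, fun Q a _ _ => (ack_zero a).trans_le (hierarchy_le_hierarchy_succ Q 0 a)⟩
  | succ j ih =>
    obtain ⟨C, hC⟩ := ih
    refine ⟨C + 1, fun Q a hQ ha => ?_⟩
    have hmono : Monotone (ack j) := ack_mono_right j
    have hid : id ≤ ack j := fun x => (lt_ack_right j x).le
    have hblock : ∀ y, a ≤ y → (ack j)^[a / Q + 1] y ≤ hierarchy Q (2 * j + 2) y := fun y hy =>
      calc (ack j)^[a / Q + 1] y ≤ (ack j)^[y / Q + 1] y :=
            Function.monotone_iterate_of_id_le hid (Nat.succ_le_succ (Nat.div_le_div_right hy)) y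
        _ ≤ (hierarchy Q (2 * j + 1))^[y / Q + 1] y :=
            hmono.iterate_le_of_forall_ge_le (id_le_hierarchy Q _)
              (fun x hx => hC Q x hQ hx) (by omega) _
    calc ack (j + 1) a = (ack j)^[a + 1] 1 := ack_succ_eq_iterate j a
      _ ≤ (ack j)^[a + 1] a := hmono.iterate _ (by omega)
      _ ≤ (ack j)^[(a / Q + 1) * (a / Q + 1)] a :=
          Function.monotone_iterate_of_id_le hid (Nat.lt_div_add_one_mul_self hQ (by omega)) a
      _ = ((ack j)^[a / Q + 1])^[a / Q + 1] a := by rw [Function.iterate_mul]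
      _ ≤ (hierarchy Q (2 * j + 2))^[a / Q + 1] a :=
          (hmono.iterate _).iterate_le_of_forall_ge_le (id_le_hierarchy Q _) hblock le_rfl _
      _ = hierarchy Q (2 * (j + 1) + 1) a := rfl

section Coloring

variable {K Q m n x y : ℕ}

def level (K Q m n : ℕ) : ℕ := Nat.findGreatest (fun j => hierarchy Q j m ≤ n) K

def stepCount (K Q m n : ℕ) : ℕ :=
  Nat.findGreatest (fun s => (hierarchy Q (level K Q m n))^[s] m ≤ n) n

/-- The reduction mod `m` only matters below `Q`, where the code may be too large. -/
def color (K Q m n : ℕ) : ℕ := ((K + 1) * stepCount K Q m n + level K Q m n) % m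

theorem color_lt (hm : 0 < m) : color K Q m n < m := Nat.mod_lt _ hm

theorem level_le : level K Q m n ≤ K := Nat.findGreatest_le K

theorem hierarchy_level_le (hmn : m < n) : hierarchy Q (level K Q m n) m ≤ n :=
  Nat.findGreatest_spec (P := fun j => hierarchy Q j m ≤ n) (Nat.zero_le K) hmn

theorem lt_hierarchy_level_succ (h : level K Q m n < K) :
    n < hierarchy Q (level K Q m n + 1) m :=
  not_le.1 <| Nat.findGreatest_is_greatest (P := fun j => hierarchy Q j m ≤ n)
    (k := level K Q m n + 1) (Nat.lt_succ_self _) h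

theorem iterate_stepCount_le (hmn : m < n) :
    (hierarchy Q (level K Q m n))^[stepCount K Q m n] m ≤ n :=
  Nat.findGreatest_spec (P := fun s => (hierarchy Q (level K Q m n))^[s] m ≤ n)
    (Nat.zero_le n) hmn.le

theorem lt_iterate_stepCount_succ (hm : 0 < m) (hmn : m < n) :
    n < (hierarchy Q (level K Q m n))^[stepCount K Q m n + 1] m := by
  have hgrow : stepCount K Q m n + m ≤ (hierarchy Q (level K Q m n))^[stepCount K Q m n] m :=
    (strictMono_nat_of_lt_succ (f := fun s => (hierarchy Q (level K Q m n))^[s] m) fun s => by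
      rw [Function.iterate_succ_apply']
      exact lt_hierarchy Q _ _).add_le_nat _ 0
  have hlt : stepCount K Q m n < n := by
    have := iterate_stepCount_le (K := K) (Q := Q) hmn
    omega
  exact not_le.1 <| Nat.findGreatest_is_greatest
    (P := fun s => (hierarchy Q (level K Q m n))^[s] m ≤ n) (k := stepCount K Q m n + 1)
    (Nat.lt_succ_self _) hlt

theorem stepCount_le_div (hmn : m < n) (h : level K Q m n < K) : stepCount K Q m n ≤ m / Q := by
  by_contra! hlt
  have hle : hierarchy Q (level K Q m n + 1) m ≤ n :=
    (Function.monotone_iterate_of_id_le (id_le_hierarchy Q _) (Nat.succ_le_of_lt hlt) m).trans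
      (iterate_stepCount_le hmn)
  exact (lt_hierarchy_level_succ h).not_ge hle

theorem level_lt (hm : Q ≤ m) (hmn : m < n) (hn : n < hierarchy Q K Q) : level K Q m n < K := by
  refine lt_of_le_of_ne level_le fun heq => ?_
  have hle := hierarchy_level_le (K := K) (Q := Q) hmn
  rw [heq] at hle
  exact (hn.trans_le (hierarchy_monotone Q K hm)).not_ge hle

theorem color_eq (hQ : 2 * (K + 1) ≤ Q) (hm : Q ≤ m) (hmn : m < n) (hn : n < hierarchy Q K Q) :
    color K Q m n = (K + 1) * stepCount K Q m n + level K Q m n := by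
  have hl := level_lt hm hmn hn
  have ht : (K + 1) * stepCount K Q m n ≤ m / 2 :=
    calc (K + 1) * stepCount K Q m n ≤ (K + 1) * (m / (2 * (K + 1))) :=
          Nat.mul_le_mul_left _ ((stepCount_le_div hmn hl).trans (Nat.div_le_div_left hQ (by omega)))
      _ ≤ m / 2 := by rw [← Nat.div_div_eq_div_mul, mul_comm]; exact Nat.div_mul_le_self _ _
  exact Nat.mod_eq_of_lt (by omega)

theorem level_eq_and_stepCount_eq_of_color_eq (hQ : 2 * (K + 1) ≤ Q) (hm : Q ≤ m)
    (hmx : m < x) (hx : x < hierarchy Q K Q) (hmy : m < y) (hy : y < hierarchy Q K Q)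
    (h : color K Q m x = color K Q m y) :
    level K Q m x = level K Q m y ∧ stepCount K Q m x = stepCount K Q m y := by
  rw [color_eq hQ hm hmx hx, color_eq hQ hm hmy hy] at h
  have hlx : level K Q m x < K + 1 := Nat.lt_succ_of_le level_le
  have hly : level K Q m y < K + 1 := Nat.lt_succ_of_le level_le
  have hmod := congrArg (· % (K + 1)) h
  have hdiv := congrArg (· / (K + 1)) h
  simp only [Nat.mul_add_mod, Nat.mul_add_div K.succ_pos, Nat.mod_eq_of_lt hlx,
    Nat.mod_eq_of_lt hly, Nat.div_eq_of_lt hlx, Nat.div_eq_of_lt hly, add_zero] at hmod hdiv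
  exact ⟨hmod, hdiv⟩

/-- Two points with the same color from `m` lie in one block `[F_l^[t] m, F_l^[t+1] m)`. -/
theorem level_lt_level_of_color_eq (hQ : 2 * (K + 1) ≤ Q) (hm : Q ≤ m) (hmx : m < x)
    (hxy : x < y) (hy : y < hierarchy Q K Q) (h : color K Q m x = color K Q m y) :
    level K Q x y < level K Q m y := by
  obtain ⟨hl, ht⟩ :=
    level_eq_and_stepCount_eq_of_color_eq hQ hm hmx (hxy.trans hy) (hmx.trans hxy) hy h
  have hlow := iterate_stepCount_le (K := K) (Q := Q) hmx
  rw [hl, ht] at hlow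
  have hhigh := lt_iterate_stepCount_succ (K := K) (Q := Q) (by omega) (hmx.trans hxy)
  set f := hierarchy Q (level K Q m y)
  by_contra! hge
  have hle : f^[stepCount K Q m y + 1] m ≤ y :=
    calc f^[stepCount K Q m y + 1] m = f (f^[stepCount K Q m y] m) :=
          Function.iterate_succ_apply' _ _ _
      _ ≤ f x := hierarchy_monotone Q _ hlow
      _ ≤ hierarchy Q (level K Q x y) x := hierarchy_mono_level Q x hge
      _ ≤ y := hierarchy_level_le hxy
  exact hhigh.not_ge hle

theorem card_le_of_level_lt (hQ : 2 * (K + 1) ≤ Q) (L : ℕ) :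
    ∀ B : Finset ℕ, B ⊆ Ico Q (hierarchy Q K Q) → IsMinHomogeneous (color K Q) B →
      (∀ m ∈ B, ∀ n ∈ B, m < n → level K Q m n < L) → B.card ≤ L + 1 := by
  induction L with
  | zero =>
    intro B _ _ hL
    refine card_le_one.2 fun a ha b hb => ?_
    by_contra hne
    rcases Nat.lt_or_gt_of_ne hne with h | h
    · exact Nat.not_lt_zero _ (hL a ha b hb h)
    · exact Nat.not_lt_zero _ (hL b hb a ha h)
  | succ L ih =>
    intro B hB hhom hL
    rcases B.eq_empty_or_nonempty with rfl | hne
    · simp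
    set m := B.min' hne
    have hmB : m ∈ B := B.min'_mem hne
    have herase : (B.erase m).card ≤ L + 1 := by
      refine ih _ ((erase_subset m B).trans hB) (hhom.mono (erase_subset m B))
        fun x hx y hy hxy => ?_
      have hxB := mem_of_mem_erase hx
      have hyB := mem_of_mem_erase hy
      have hmx : m < x := lt_of_le_of_ne (B.min'_le x hxB) (ne_of_mem_erase hx).symm
      have hlt := level_lt_level_of_color_eq hQ (mem_Ico.1 (hB hmB)).1 hmx hxy
        (mem_Ico.1 (hB hyB)).2 (hhom m x y hmB hxB hyB hmx (hmx.trans hxy))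
      have := hL m hmB y hyB (hmx.trans hxy)
      omega
    have := card_erase_add_one hmB
    omega

theorem card_le_of_isMinHomogeneous (hQ : 2 * (K + 1) ≤ Q) {B : Finset ℕ}
    (hB : B ⊆ Ico 1 (hierarchy Q K Q)) (hhom : IsMinHomogeneous (color K Q) B) :
    B.card ≤ Q + K := by
  have hsmall : (B.filter (· < Q)).card ≤ Q - 1 := by
    refine (card_le_card fun x hx => ?_).trans (Nat.card_Ico 1 Q).le
    rw [mem_filter] at hx
    exact mem_Ico.2 ⟨(mem_Ico.1 (hB hx.1)).1, hx.2⟩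
  have hlarge : (B.filter (¬ · < Q)).card ≤ K + 1 := by
    refine card_le_of_level_lt hQ K _ (fun x hx => ?_) (hhom.mono (filter_subset _ _))
      fun m hm n hn hmn => ?_
    · rw [mem_filter] at hx
      exact mem_Ico.2 ⟨not_lt.1 hx.2, (mem_Ico.1 (hB hx.1)).2⟩
    · rw [mem_filter] at hm hn
      exact level_lt (not_lt.1 hm.2) hmn (mem_Ico.1 (hB hn.1)).2
  have := card_filter_add_card_filter_not (s := B) (p := (· < Q))
  omega

end Coloring

theorem hierarchy_le_nu {K Q k : ℕ} (hQ : 2 * (K + 1) ≤ Q) (hk : Q + K < k) :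
    hierarchy Q K Q ≤ nu k := by
  have := lt_nu_of_forall_card_lt (N := hierarchy Q K Q - 1) (color K Q)
    (fun _ _ hm _ => color_lt hm) fun B hB hhom =>
      (card_le_of_isMinHomogeneous hQ (hB.trans fun x hx => by
        rw [mem_Icc] at hx
        rw [mem_Ico]
        omega) hhom).trans_lt hk
  omega

end RegressiveRamsey

open RegressiveRamsey

theorem nu_dominates_primrec (g : ℕ → ℕ) (hg : Nat.Primrec g) :
    ∃ K : ℕ, ∀ k ≥ K, g k < nu k := by
  obtain ⟨i, hi⟩ := exists_lt_ack_of_nat_primrec hg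
  obtain ⟨C, hC⟩ := ack_le_hierarchy i
  refine ⟨4 * (C + 2 * i + 30), fun k hk => ?_⟩
  obtain ⟨J, hJ⟩ : ∃ J, k / 4 = J + 1 := ⟨k / 4 - 1, by omega⟩
  set Q := 2 * (J + 1) + 2 with hQdef
  have hQ : 0 < Q := by omega
  have hlarge : Q * Q + C + k ≤ hierarchy Q J Q :=
    calc Q * Q + C + k ≤ Q + 5 * J ^ 2 := by
          have hJ23 : 23 ≤ J := by omega
          have hCJ : C ≤ J := by omega
          have hkJ : k ≤ 4 * J + 7 := by omega
          rw [hQdef]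
          nlinarith
      _ ≤ Q + 2 ^ J := Nat.add_le_add_left (five_mul_sq_le_two_pow (by omega)) Q
      _ ≤ hierarchy Q J Q := add_two_pow_le_hierarchy hQ J Q le_rfl
  calc g k < ack i k := hi k
    _ ≤ ack i (hierarchy Q J Q) := ack_mono_right i (by omega)
    _ ≤ hierarchy Q (2 * i + 1) (hierarchy Q J Q) := hC Q _ hQ (by omega)
    _ ≤ hierarchy Q J (hierarchy Q J Q) := hierarchy_mono_level Q _ (by omega)
    _ ≤ hierarchy Q (J + 1) Q := hierarchy_comp_le_succ hQ le_rfl J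
    _ ≤ nu k := hierarchy_le_nu le_rfl (by omega)
end

section
/- Fix an integer k > 2. For all n ≥ m ≥ 4k² with n > m, d(m,n) ≤ √m / 2 (equivalently, d(m,n) ≤ ⌊√m/2⌋, since d(m,n) is a natural number). -/
/-- `f i` for `i ≥ 1`: `f 1 n = n + 1`, `f (i+1) n = (f i)^[⌊√n/2⌋] n`. -/
def f : ℕ → ℕ → ℕ
  | 0, n => n
  | 1, n => n + 1
  | i + 2, n => (f (i + 1))^[Nat.sqrt n / 2] n

/-- `d k i m n = |{l : m < f_i^(l)(4k²) ≤ n}|`. -/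
noncomputable def d (k i m n : ℕ) : ℕ :=
  {l : ℕ | m < (f i)^[l] (4 * k ^ 2) ∧ (f i)^[l] (4 * k ^ 2) ≤ n}.ncard

/-- `I k m n` is the greatest `i ≥ 1` with `d k i m n > 0`. -/
noncomputable def I (k m n : ℕ) : ℕ := sSup {i : ℕ | 1 ≤ i ∧ 0 < d k i m n}

/-- `D k m n = d_{I(m,n)}(m,n)`. -/
noncomputable def D (k m n : ℕ) : ℕ := d k (I k m n) m n

/-- The standard pairing function `Pr(m,n) = C(m+n+1,2) + n`. -/
def Pr (m n : ℕ) : ℕ := (m + n + 1).choose 2 + n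

/-- The coloring `c({m,n}) = Pr(I(m,n), d(m,n))` (on pairs `m < n`). -/
noncomputable def c (k m n : ℕ) : ℕ := Pr (I k m n) (D k m n)

/-!
The orbit of `f (i+1)` from `4k²` is a sub-orbit of that of `f i`, obtained by jumping
`⌊√x/2⌋` steps of `f i` from the current point `x`. Let `i = I(m,n)` and let `x ≤ m` be the
last point of the `f (i+1)`-orbit not above `m`. Its successor skips `⌊√x/2⌋ ≤ ⌊√m/2⌋` points
of the `f i`-orbit, and the `f i`-orbit points in `(m, n]` are consecutive. So if there were
more than `⌊√m/2⌋` of them, the successor would land in `(m, n]`, giving `d_{i+1}(m,n) > 0`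
against the maximality of `i`.
-/

section StrictMono

variable {u : ℕ → ℕ}

lemma exists_le_lt_succ_of_strictMono (hu : StrictMono u) {m : ℕ} (h0 : u 0 ≤ m) :
    ∃ t, u t ≤ m ∧ m < u (t + 1) := by
  have hex : ∃ t, m < u t := ⟨m + 1, (hu.id_le (m + 1)).trans_lt' (Nat.lt_succ_self m)⟩
  have hpos : Nat.find hex ≠ 0 := fun h => (Nat.find_spec hex).not_ge (h ▸ h0)
  refine ⟨Nat.find hex - 1, not_lt.mp (Nat.find_min hex (by omega)), ?_⟩
  rw [Nat.sub_add_cancel (Nat.one_le_iff_ne_zero.mpr hpos)]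
  exact Nat.find_spec hex

lemma finite_setOf_mem_Ioc_of_strictMono (hu : StrictMono u) (m n : ℕ) :
    {l | m < u l ∧ u l ≤ n}.Finite :=
  (Set.finite_Iic n).subset fun l hl => (hu.id_le l).trans hl.2

/-- The indices `l` with `u l ∈ (m, n]` form a block of consecutive integers, so a jump of at
most that many steps from below `m` to above `m` cannot overshoot `n`. -/
lemma apply_add_le_of_le_ncard (hu : StrictMono u) {m n σ j : ℕ} (hσ : u σ ≤ m)
    (hj : m < u (σ + j)) (hjn : j ≤ {l | m < u l ∧ u l ≤ n}.ncard) : u (σ + j) ≤ n := by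
  by_contra! hn
  have hsub : {l | m < u l ∧ u l ≤ n} ⊆ Set.Ioo σ (σ + j) := fun l ⟨hml, hln⟩ =>
    ⟨hu.lt_iff_lt.mp (hσ.trans_lt hml), hu.lt_iff_lt.mp (hln.trans_lt hn)⟩
  have hj0 : j ≠ 0 := by
    rintro rfl
    exact hσ.not_gt hj
  have := (Set.ncard_le_ncard hsub).trans_eq (Set.ncard_Ioo_nat σ (σ + j))
  omega

end StrictMono

section Iterate

variable {g : ℕ → ℕ} {a : ℕ}

lemma add_le_iterate_of_lt_self (hg : ∀ x, a ≤ x → x < g x) {x : ℕ} (hx : a ≤ x) (l : ℕ) :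
    x + l ≤ g^[l] x := by
  induction l generalizing x with
  | zero => rfl
  | succ l ih =>
    rw [Function.iterate_succ_apply]
    have := hg x hx
    have := ih (hx.trans this.le)
    omega

lemma strictMono_iterate_of_lt_self (hg : ∀ x, a ≤ x → x < g x) {x : ℕ} (hx : a ≤ x) :
    StrictMono fun l => g^[l] x :=
  strictMono_nat_of_lt_succ fun l => by
    rw [Function.iterate_succ_apply']
    exact hg _ (hx.trans ((Nat.le_add_right x l).trans (add_le_iterate_of_lt_self hg hx l)))

end Iterate

lemma exists_iterate_eq_iterate {α : Type*} (g : α → α) (s : α → ℕ) (x : α) (t : ℕ) :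
    ∃ σ, (fun y => g^[s y] y)^[t] x = g^[σ] x := by
  induction t with
  | zero => exact ⟨0, rfl⟩
  | succ t ih =>
    obtain ⟨σ, hσ⟩ := ih
    exact ⟨s (g^[σ] x) + σ, by rw [Function.iterate_succ_apply', hσ, Function.iterate_add_apply]⟩

lemma f_succ_apply {i : ℕ} (hi : 1 ≤ i) (x : ℕ) : f (i + 1) x = (f i)^[Nat.sqrt x / 2] x := by
  obtain ⟨j, rfl⟩ := Nat.exists_eq_add_of_le' hi
  rfl

lemma lt_f_self {i : ℕ} (hi : 1 ≤ i) {x : ℕ} (hx : 4 ≤ x) : x < f i x := by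
  induction i, hi using Nat.le_induction generalizing x with
  | base => exact Nat.lt_succ_self x
  | succ i hi ih =>
    have hs : 1 ≤ Nat.sqrt x / 2 := by
      have : 2 ≤ Nat.sqrt x := Nat.le_sqrt.mpr hx
      omega
    rw [f_succ_apply hi]
    have := add_le_iterate_of_lt_self (fun _ => ih) hx (Nat.sqrt x / 2)
    omega

/-- From `16` on, each `f (i+1)` takes at least two steps of `f i`. -/
lemma f_lt_f_succ {i : ℕ} (hi : 1 ≤ i) {x : ℕ} (hx : 16 ≤ x) : f i x < f (i + 1) x := by
  have hs : 2 ≤ Nat.sqrt x / 2 := by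
    have : 4 ≤ Nat.sqrt x := Nat.le_sqrt.mpr hx
    omega
  rw [f_succ_apply hi]
  have hmono := strictMono_iterate_of_lt_self (fun _ => lt_f_self hi) (by omega : 4 ≤ x)
  exact (hmono.lt_iff_lt.mpr (by omega : 1 < 2)).trans_le (hmono.monotone hs)

lemma add_le_f {i : ℕ} (hi : 1 ≤ i) {x : ℕ} (hx : 16 ≤ x) : x + i ≤ f i x := by
  induction i, hi using Nat.le_induction with
  | base => rfl
  | succ i hi ih =>
    have := f_lt_f_succ hi hx
    omega

section Count

variable {k m n : ℕ}

lemma d_zero (hm : 4 * k ^ 2 ≤ m) : d k 0 m n = 0 := by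
  have hid : f 0 = id := rfl
  simp [d, hid, Function.iterate_id, Nat.not_lt.mpr hm]

lemma d_pos_of_mem {i l : ℕ} (hi : 1 ≤ i) (hk : 1 ≤ k) (hml : m < (f i)^[l] (4 * k ^ 2))
    (hln : (f i)^[l] (4 * k ^ 2) ≤ n) : 0 < d k i m n :=
  (Set.ncard_pos (finite_setOf_mem_Ioc_of_strictMono
    (strictMono_iterate_of_lt_self (fun _ => lt_f_self hi) (by nlinarith)) m n)).mpr
    ⟨l, hml, hln⟩

/-- Since `i < f i (4k²)`, which is the first orbit point above `4k² ≤ m`, no `i > n` counts. -/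
lemma bddAbove_setOf_d_pos (hk : 2 ≤ k) (hm : 4 * k ^ 2 ≤ m) :
    BddAbove {i | 1 ≤ i ∧ 0 < d k i m n} := by
  refine ⟨n, fun i ⟨hi, hd⟩ => ?_⟩
  obtain ⟨l, hml, hln⟩ := Set.nonempty_of_ncard_ne_zero hd.ne'
  have hx : 16 ≤ 4 * k ^ 2 := by nlinarith
  have hu := strictMono_iterate_of_lt_self (fun _ => lt_f_self hi) (by omega : 4 ≤ 4 * k ^ 2)
  have hl : 1 ≤ l := by
    rcases Nat.eq_zero_or_pos l with rfl | hl
    · exact absurd hml (Nat.not_lt.mpr hm)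
    · exact hl
  have h1 : f i (4 * k ^ 2) ≤ (f i)^[l] (4 * k ^ 2) := hu.monotone hl
  have := add_le_f hi hx
  omega

lemma le_I_of_d_pos {i : ℕ} (hk : 2 ≤ k) (hm : 4 * k ^ 2 ≤ m) (hi : 1 ≤ i)
    (hd : 0 < d k i m n) : i ≤ I k m n :=
  le_csSup (bddAbove_setOf_d_pos hk hm) ⟨hi, hd⟩

lemma one_le_I_of_D_pos (hm : 4 * k ^ 2 ≤ m) (hD : 0 < D k m n) : 1 ≤ I k m n := by
  by_contra! h
  rw [D, Nat.lt_one_iff.mp h, d_zero hm] at hD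
  exact hD.false

end Count

theorem D_le_sqrt_div_two_general (k : ℕ) (hk : 2 < k) (m n : ℕ)
    (hm : 4 * k ^ 2 ≤ m) :
    D k m n ≤ Nat.sqrt m / 2 := by
  by_contra! hD
  set i := I k m n
  have hi : 1 ≤ i := one_le_I_of_D_pos hm (by omega)
  have hi' : 1 ≤ i + 1 := Nat.le_succ_of_le hi
  have hx : 4 ≤ 4 * k ^ 2 := by nlinarith
  obtain ⟨t, ht, ht'⟩ := exists_le_lt_succ_of_strictMono
    (strictMono_iterate_of_lt_self (fun _ => lt_f_self hi') hx) hm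
  obtain ⟨σ, hσ⟩ := exists_iterate_eq_iterate (f i) (fun x => Nat.sqrt x / 2) (4 * k ^ 2) t
  rw [← funext (f_succ_apply hi)] at hσ
  have hnext : (f (i + 1))^[t + 1] (4 * k ^ 2) =
      (f i)^[σ + Nat.sqrt ((f i)^[σ] (4 * k ^ 2)) / 2] (4 * k ^ 2) := by
    rw [Function.iterate_succ_apply', hσ, f_succ_apply hi, add_comm, Function.iterate_add_apply]
  rw [hσ] at ht
  rw [hnext] at ht'
  have hjump : Nat.sqrt ((f i)^[σ] (4 * k ^ 2)) / 2 ≤ D k m n :=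
    (Nat.div_le_div_right (Nat.sqrt_le_sqrt ht)).trans hD.le
  have hn := apply_add_le_of_le_ncard
    (strictMono_iterate_of_lt_self (fun _ => lt_f_self hi) hx) ht ht' hjump
  have hd : 0 < d k (i + 1) m n := d_pos_of_mem hi' (by omega) (hnext ▸ ht') (hnext ▸ hn)
  have := le_I_of_d_pos hk.le hm hi' hd
  omega

theorem D_le_sqrt_div_two (k : ℕ) (hk : 2 < k) (m n : ℕ)
    (hm : 4 * k ^ 2 ≤ m) (hmn : m < n) :
    D k m n ≤ Nat.sqrt m / 2 :=
  D_le_sqrt_div_two_general k hk m n hm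
end

section
/- Fix an integer k > 2 and define the pair coloring c({m,n}) = Pr(I(m,n), d(m,n)) on {n : n ≥ 4k²}. Then for every i ≥ 1, every increasing sequence x_0 < x_1 < ... < x_i of numbers ≥ 4k² with d_i(x_0, x_i) = 0 is not min-homogeneous for c; that is, there exist indices a < b and a < b' such that c({x_a, x_b}) ≠ c({x_a, x_{b'}}). -/
lemma sqrt2 {n : ℕ} (hn : 4 ≤ n) : 1 ≤ Nat.sqrt n / 2 := by
  have : 2 ≤ Nat.sqrt n := Nat.le_sqrt.mpr (by omega)
  omega

lemma iter_add_of (F : ℕ → ℕ) (hF : ∀ n, 4 ≤ n → n + 1 ≤ F n) :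
    ∀ l n, 4 ≤ n → n + l ≤ F^[l] n := by
  intro l
  induction l with
  | zero => simp
  | succ l ih =>
    intro n hn
    have h1 := hF n hn
    rw [Function.iterate_succ_apply]
    have := ih (F n) (by omega)
    omega

lemma f_eq (j : ℕ) (hj : 1 ≤ j) (n : ℕ) :
    f (j + 1) n = (f j)^[Nat.sqrt n / 2] n := by
  obtain ⟨j, rfl⟩ := Nat.exists_eq_add_of_le' hj
  rfl

lemma f_succ_le : ∀ i, 1 ≤ i → ∀ n, 4 ≤ n → n + 1 ≤ f i n := by
  intro i
  induction i with
  | zero => omega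
  | succ j ih =>
    intro _ n hn
    rcases Nat.eq_zero_or_pos j with rfl | hj
    · simp [f]
    · rw [f_eq j hj n]
      have := iter_add_of (f j) (ih hj) (Nat.sqrt n / 2) n hn
      have := sqrt2 hn
      omega

lemma iter_le {i : ℕ} (hi : 1 ≤ i) (l n : ℕ) (hn : 4 ≤ n) : n + l ≤ (f i)^[l] n :=
  iter_add_of (f i) (f_succ_le i hi) l n hn

/-- `f i N ≥ N + i` for `N ≥ 16`. -/

lemma fN_ge {N : ℕ} (hN : 16 ≤ N) : ∀ i, 1 ≤ i → N + i ≤ f i N := by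
  intro i
  induction i with
  | zero => omega
  | succ j ih =>
    intro _
    rcases Nat.eq_zero_or_pos j with rfl | hj
    · simp [f]
    · rw [f_eq j hj N]
      set cnt := Nat.sqrt N / 2 with hc
      have hc2 : 2 ≤ cnt := by
        have : 4 ≤ Nat.sqrt N := Nat.le_sqrt.mpr (by nlinarith)
        omega
      have h1 : N + j ≤ f j N := ih hj
      have : (f j)^[cnt] N = (f j)^[cnt - 1] ((f j)^[1] N) := by
        rw [← Function.iterate_add_apply]
        congr 1
        omega
      rw [this]
      simp only [Function.iterate_one]
      have := iter_le hj (cnt - 1) (f j N) (by omega)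
      omega

lemma hN4 {k : ℕ} (hk : 2 < k) : 36 ≤ 4 * k ^ 2 := by nlinarith

lemma S_finite {k i m n : ℕ} (hk : 2 < k) (hi : 1 ≤ i) :
    {l : ℕ | m < (f i)^[l] (4 * k ^ 2) ∧ (f i)^[l] (4 * k ^ 2) ≤ n}.Finite := by
  apply Set.Finite.subset (Set.finite_Iic n)
  intro l hl
  simp only [Set.mem_setOf_eq] at hl
  have := iter_le hi l (4 * k ^ 2) (by have := hN4 hk; omega)
  simp only [Set.mem_Iic]
  omega

lemma d_pos_iff {k i m n : ℕ} (hk : 2 < k) (hi : 1 ≤ i) :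
    0 < d k i m n ↔
      ∃ l, m < (f i)^[l] (4 * k ^ 2) ∧ (f i)^[l] (4 * k ^ 2) ≤ n := by
  rw [d, Set.ncard_pos (S_finite hk hi)]
  rfl

lemma f1_iter (l n : ℕ) : (f 1)^[l] n = n + l := by
  induction l with
  | zero => simp
  | succ l ih => rw [Function.iterate_succ_apply', ih]; simp [f]; omega

lemma d1_pos {k m n : ℕ} (hk : 2 < k) (hm : 4 * k ^ 2 ≤ m) (hmn : m < n) :
    0 < d k 1 m n := by
  rw [d_pos_iff hk le_rfl]
  exact ⟨m + 1 - 4 * k ^ 2, by rw [f1_iter]; omega⟩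

/-- every `f (j+1)`-iterate of `N` is an `f j`-iterate of `N`. -/

lemma iter_image {j : ℕ} (hj : 1 ≤ j) (N : ℕ) :
    ∀ l, ∃ l', (f (j + 1))^[l] N = (f j)^[l'] N := by
  intro l
  induction l with
  | zero => exact ⟨0, rfl⟩
  | succ l ih =>
    obtain ⟨l', hl'⟩ := ih
    refine ⟨Nat.sqrt ((f (j + 1))^[l] N) / 2 + l', ?_⟩
    rw [Function.iterate_succ_apply', f_eq j hj, Function.iterate_add_apply, ← hl']

lemma d_zero_mono {k m n : ℕ} (hk : 2 < k) {j j' : ℕ} (hj : 1 ≤ j) (hjj : j ≤ j')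
    (h : d k j m n = 0) : d k j' m n = 0 := by
  induction j' with
  | zero => omega
  | succ j' ih =>
    rcases Nat.lt_or_ge j (j' + 1) with hlt | hge
    · have hj' : 1 ≤ j' := by omega
      have h0 : d k j' m n = 0 := ih (by omega)
      by_contra hpos
      obtain ⟨l, hl1, hl2⟩ := (d_pos_iff hk (by omega)).mp (Nat.pos_of_ne_zero hpos)
      obtain ⟨l', hl'⟩ := iter_image hj' (4 * k ^ 2) l
      have : 0 < d k j' m n := (d_pos_iff hk hj').mpr ⟨l', by rw [← hl']; exact ⟨hl1, hl2⟩⟩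
      omega
    · have : j = j' + 1 := by omega
      subst this; exact h

lemma d_add {k j m p n : ℕ} (hk : 2 < k) (hj : 1 ≤ j) (hmp : m ≤ p) (hpn : p ≤ n) :
    d k j m n = d k j m p + d k j p n := by
  have hU : {l : ℕ | m < (f j)^[l] (4 * k ^ 2) ∧ (f j)^[l] (4 * k ^ 2) ≤ n}
      = {l : ℕ | m < (f j)^[l] (4 * k ^ 2) ∧ (f j)^[l] (4 * k ^ 2) ≤ p}
      ∪ {l : ℕ | p < (f j)^[l] (4 * k ^ 2) ∧ (f j)^[l] (4 * k ^ 2) ≤ n} := by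
    ext l
    simp only [Set.mem_setOf_eq, Set.mem_union]
    omega
  rw [d, hU, Set.ncard_union_eq ?_ (S_finite hk hj) (S_finite hk hj)]
  · rfl
  · rw [Set.disjoint_left]
    intro l h1 h2
    simp only [Set.mem_setOf_eq] at h1 h2
    omega

lemma I_mem {k m n : ℕ} (hk : 2 < k) (hm : 4 * k ^ 2 ≤ m) (hmn : m < n) :
    1 ≤ I k m n ∧ 0 < d k (I k m n) m n := by
  have hne : {i : ℕ | 1 ≤ i ∧ 0 < d k i m n}.Nonempty := ⟨1, le_rfl, d1_pos hk hm hmn⟩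
  have hbdd : BddAbove {i : ℕ | 1 ≤ i ∧ 0 < d k i m n} := by
    refine ⟨n, fun j hj => ?_⟩
    obtain ⟨hj1, hjpos⟩ := hj
    obtain ⟨l, hl1, hl2⟩ := (d_pos_iff hk hj1).mp hjpos
    have hl0 : l ≠ 0 := by
      intro h
      subst h
      simp at hl1
      omega
    have h1 : f j (4 * k ^ 2) ≤ (f j)^[l] (4 * k ^ 2) := by
      have : (f j)^[l] (4 * k ^ 2) = (f j)^[l - 1] (f j (4 * k ^ 2)) := by
        conv_lhs => rw [show l = (l - 1) + 1 by omega]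
        rw [Function.iterate_add_apply]
        simp
      rw [this]
      have := iter_le hj1 (l - 1) (f j (4 * k ^ 2))
        (by have := fN_ge (N := 4 * k ^ 2) (by have := hN4 hk; omega) j hj1
            have := hN4 hk; omega)
      omega
    have h2 := fN_ge (N := 4 * k ^ 2) (by have := hN4 hk; omega) j hj1
    omega
  exact Nat.sSup_mem hne hbdd

lemma I_lt {k m n i : ℕ} (hk : 2 < k) (hi : 1 ≤ i) (hm : 4 * k ^ 2 ≤ m) (hmn : m < n)
    (hd : d k i m n = 0) : I k m n < i := by
  obtain ⟨h1, h2⟩ := I_mem hk hm hmn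
  by_contra h
  have := d_zero_mono hk hi (by omega : i ≤ I k m n) hd
  omega

lemma Pr_lt_of_sum_lt {m n m' n' : ℕ} (h : m + n < m' + n') : Pr m n < Pr m' n' := by
  have h1 : Pr m n < (m + n + 2).choose 2 := by
    have he : (m + n + 2).choose 2 = (m + n + 1).choose 1 + (m + n + 1).choose 2 :=
      Nat.choose_succ_succ (m + n + 1) 1
    simp only [Nat.choose_one_right] at he
    rw [Pr]
    omega
  have h2 : (m + n + 2).choose 2 ≤ (m' + n' + 1).choose 2 :=
    Nat.choose_le_choose 2 (by omega)
  have h3 : (m' + n' + 1).choose 2 ≤ Pr m' n' := Nat.le_add_right _ _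
  omega

lemma Pr_inj {m n m' n' : ℕ} (h : Pr m n = Pr m' n') : m = m' ∧ n = n' := by
  have hs : m + n = m' + n' := by
    rcases Nat.lt_trichotomy (m + n) (m' + n') with hlt | heq | hgt
    · exact absurd h (Nat.ne_of_lt (Pr_lt_of_sum_lt hlt))
    · exact heq
    · exact absurd h.symm (Nat.ne_of_lt (Pr_lt_of_sum_lt hgt))
  rw [Pr, Pr, hs] at h
  omega

theorem no_min_homogeneous_of_d_eq_zero (k : ℕ) (hk : 2 < k)
    (i : ℕ) (hi : 1 ≤ i) (x : ℕ → ℕ)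
    (hmono : ∀ a b, a < b → b ≤ i → x a < x b)
    (hx0 : 4 * k ^ 2 ≤ x 0)
    (hd : d k i (x 0) (x i) = 0) :
    ∃ a b b', a < b ∧ b ≤ i ∧ a < b' ∧ b' ≤ i ∧
      c k (x a) (x b) ≠ c k (x a) (x b') := by
  by_contra hcon
  push_neg at hcon
  have hxa : ∀ a, a ≤ i → 4 * k ^ 2 ≤ x a := by
    intro a ha
    rcases Nat.eq_zero_or_pos a with rfl | hpos
    · exact hx0
    · exact le_of_lt (lt_of_le_of_lt hx0 (hmono 0 a hpos ha))
  set J : ℕ → ℕ := fun a => I k (x a) (x i) with hJ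
  have hJmem : ∀ a, a < i → 1 ≤ J a ∧ 0 < d k (J a) (x a) (x i) := fun a ha =>
    I_mem hk (hxa a (by omega)) (hmono a i ha le_rfl)
  have hdesc : ∀ a, a + 1 < i → J (a + 1) < J a := by
    intro a ha
    have hc := hcon a (a + 1) i (by omega) (by omega) (by omega) le_rfl
    rw [c, c] at hc
    obtain ⟨hI, hD⟩ := Pr_inj hc
    rw [D, D, hI] at hD
    have hj1 : 1 ≤ J a := (hJmem a (by omega)).1
    have hadd := d_add hk hj1 (le_of_lt (hmono a (a + 1) (by omega) (by omega)))
      (le_of_lt (hmono (a + 1) i ha le_rfl))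
    have hz : d k (J a) (x (a + 1)) (x i) = 0 := by
      have hD' : d k (J a) (x a) (x (a + 1)) = d k (J a) (x a) (x i) := hD
      omega
    obtain ⟨h1, h2⟩ := hJmem (a + 1) ha
    by_contra hge
    have := d_zero_mono hk hj1 (by omega : J a ≤ J (a + 1)) hz
    omega
  have hJ0 : J 0 < i := I_lt hk hi (hxa 0 (by omega)) (hmono 0 i hi le_rfl) hd
  have hbound : ∀ a, a < i → J a + a ≤ J 0 := by
    intro a
    induction a with
    | zero => omega
    | succ a ih =>
      intro ha
      have := hdesc a ha
      have := ih (by omega)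
      omega
  have h1 := (hJmem (i - 1) (by omega)).1
  have h2 := hbound (i - 1) (by omega)
  omega
end

section
/- For all natural numbers n ≥ 16 and i ≥ 7, 16n² ≤ f_i(n). -/
/-!
Write `s n = ⌊√n⌋ / 2` for the number of iterations; it is monotone, so by induction on `i`,
`f (i + 2) n ≥ n + (s n) ^ (i + 1)`. For `n ≥ 144` (so `s n ≥ 6`) this gives
`f 4 n ≥ 2 n`, hence `f 5 n ≥ 2 ^ s n * n ≥ 64 n` and `f 6 n ≥ 64 ^ s n * n ≥ 16 n ^ 2`, the last
step because `n < 4 (s n + 1) ^ 2`. As `s n ≥ 2` for `n ≥ 16`, `f 7 n ≥ f 6 (f 6 n)`, which is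
`≥ 16 n ^ 2` as soon as `f 6 n ≥ 144`; for `16 ≤ n < 36`, where only `f 6 n ≥ 48` is available,
three applications of `f 5` inside `f 6 (f 6 n)` already exceed `16 * 35 ^ 2`.
Finally `f i n` is nondecreasing in `i` once `s n ≥ 1`.
-/

section Iterate

variable {g : ℕ → ℕ} {m c d : ℕ}

theorem add_mul_le_iterate (hg : ∀ x, m ≤ x → x + d ≤ g x) (t : ℕ) :
    m + t * d ≤ g^[t] m := by
  induction t with
  | zero => simp
  | succ t ih =>
    rw [Function.iterate_succ_apply']
    calc m + (t + 1) * d = (m + t * d) + d := by ring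
      _ ≤ g^[t] m + d := Nat.add_le_add_right ih d
      _ ≤ g (g^[t] m) := hg _ (le_of_add_le_left ih)

theorem pow_mul_le_iterate (hc : 1 ≤ c) (hg : ∀ x, m ≤ x → c * x ≤ g x) (t : ℕ) :
    c ^ t * m ≤ g^[t] m := by
  induction t with
  | zero => simp
  | succ t ih =>
    rw [Function.iterate_succ_apply']
    have hm : m ≤ g^[t] m := (Nat.le_mul_of_pos_left m (pow_pos hc t)).trans ih
    calc c ^ (t + 1) * m = c * (c ^ t * m) := by ring
      _ ≤ c * g^[t] m := Nat.mul_le_mul_left c ih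
      _ ≤ g (g^[t] m) := hg _ hm

end Iterate

theorem le_sqrt_div_two {c n : ℕ} (h : 4 * c ^ 2 ≤ n) : c ≤ Nat.sqrt n / 2 := by
  have := Nat.le_sqrt'.2 (show (2 * c) ^ 2 ≤ n by linarith)
  omega

theorem lt_four_mul_sqrt_div_two_add_one_sq (n : ℕ) : n < 4 * (Nat.sqrt n / 2 + 1) ^ 2 := by
  have h := Nat.lt_succ_sqrt' n
  have : Nat.sqrt n + 1 ≤ 2 * (Nat.sqrt n / 2 + 1) := by omega
  nlinarith

theorem sixty_four_mul_add_one_sq_le_pow {k : ℕ} (hk : 2 ≤ k) : 64 * (k + 1) ^ 2 ≤ 64 ^ k := by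
  induction k, hk using Nat.le_induction with
  | base => norm_num
  | succ k hk ih =>
    have : (k + 2) ^ 2 ≤ 4 * (k + 1) ^ 2 := by nlinarith
    rw [pow_succ 64 k]
    nlinarith

theorem self_le_f : ∀ i n, n ≤ f i n
  | 0, _ => le_rfl
  | 1, n => n.le_succ
  | i + 2, n => Function.id_le_iterate_of_id_le (self_le_f (i + 1)) _ n

theorem iterate_le_f_add_two {i k n : ℕ} (hk : k ≤ Nat.sqrt n / 2) :
    (f (i + 1))^[k] n ≤ f (i + 2) n :=
  Function.monotone_iterate_of_id_le (self_le_f (i + 1)) hk n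

theorem f_le_f_succ (i : ℕ) {n : ℕ} (hn : 4 ≤ n) : f i n ≤ f (i + 1) n := by
  cases i with
  | zero => exact n.le_succ
  | succ i => exact iterate_le_f_add_two (k := 1) (le_sqrt_div_two (by omega))

theorem add_sqrt_div_two_pow_le_f (i n : ℕ) : n + (Nat.sqrt n / 2) ^ (i + 1) ≤ f (i + 2) n := by
  induction i generalizing n with
  | zero =>
    show n + _ ≤ (f 1)^[_] n
    simpa using add_mul_le_iterate (g := f 1) (m := n) (d := 1) (fun _ _ => le_rfl) _
  | succ i ih =>
    have hstep : ∀ x, n ≤ x → x + (Nat.sqrt n / 2) ^ (i + 1) ≤ f (i + 2) x := fun x hx =>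
      le_trans (by gcongr) (ih x)
    calc n + (Nat.sqrt n / 2) ^ (i + 2) = n + Nat.sqrt n / 2 * (Nat.sqrt n / 2) ^ (i + 1) := by
          ring
      _ ≤ f (i + 3) n := add_mul_le_iterate hstep _

theorem add_pow_le_f {c n : ℕ} (h : 4 * c ^ 2 ≤ n) (i : ℕ) : n + c ^ (i + 1) ≤ f (i + 2) n :=
  le_trans (by gcongr; exact le_sqrt_div_two h) (add_sqrt_div_two_pow_le_f i n)

theorem two_mul_le_f_four {n : ℕ} (hn : 144 ≤ n) : 2 * n ≤ f 4 n := by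
  have hs : 6 ≤ Nat.sqrt n / 2 := le_sqrt_div_two (by omega)
  have hlt := lt_four_mul_sqrt_div_two_add_one_sq n
  have : n ≤ (Nat.sqrt n / 2) ^ 3 := by nlinarith
  have h : n + (Nat.sqrt n / 2) ^ 3 ≤ f 4 n := add_sqrt_div_two_pow_le_f 2 n
  omega

theorem sixty_four_mul_le_f_five {n : ℕ} (hn : 144 ≤ n) : 64 * n ≤ f 5 n :=
  calc 64 * n = 2 ^ 6 * n := by norm_num
    _ ≤ 2 ^ (Nat.sqrt n / 2) * n := by
        gcongr
        · norm_num
        · exact le_sqrt_div_two (by omega)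
    _ ≤ f 5 n := pow_mul_le_iterate one_le_two (fun x hx => two_mul_le_f_four (hn.trans hx)) _

theorem sixteen_sq_le_f_six {n : ℕ} (hn : 144 ≤ n) : 16 * n ^ 2 ≤ f 6 n := by
  have hs : 2 ≤ Nat.sqrt n / 2 := le_sqrt_div_two (by omega)
  have h16 : 16 * n ≤ 64 ^ (Nat.sqrt n / 2) := by
    linarith [lt_four_mul_sqrt_div_two_add_one_sq n, sixty_four_mul_add_one_sq_le_pow hs]
  calc 16 * n ^ 2 = 16 * n * n := by ring
    _ ≤ 64 ^ (Nat.sqrt n / 2) * n := Nat.mul_le_mul_right n h16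
    _ ≤ f 6 n := pow_mul_le_iterate (by norm_num)
        (fun x hx => sixty_four_mul_le_f_five (hn.trans hx)) _

theorem sixteen_sq_le_f_seven {n : ℕ} (hn : 16 ≤ n) : 16 * n ^ 2 ≤ f 7 n := by
  refine le_trans ?_ (iterate_le_f_add_two (k := 2) (le_sqrt_div_two (by omega)))
  show 16 * n ^ 2 ≤ f 6 (f 6 n)
  rcases le_or_gt 36 n with hn36 | hn36
  · have hm : 144 ≤ f 6 n := le_trans (by omega) (add_pow_le_f (c := 3) (by omega) 4)
    calc 16 * n ^ 2 ≤ 16 * f 6 n ^ 2 := by gcongr; exact self_le_f 6 n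
      _ ≤ f 6 (f 6 n) := sixteen_sq_le_f_six hm
  · set m := f 6 n
    have hm : 48 ≤ m := le_trans (by omega) (add_pow_le_f (c := 2) (by omega) 4)
    have h1 : 129 ≤ f 5 m := le_trans (by omega) (add_pow_le_f (c := 3) (by omega) 3)
    have h2 : 754 ≤ f 5 (f 5 m) := le_trans (by omega) (add_pow_le_f (c := 5) (by omega) 3)
    have h3 : 64 * f 5 (f 5 m) ≤ f 5 (f 5 (f 5 m)) := sixty_four_mul_le_f_five (by omega)
    have h6 : f 5 (f 5 (f 5 m)) ≤ f 6 m :=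
      iterate_le_f_add_two (i := 4) (k := 3) (le_sqrt_div_two (by omega))
    nlinarith

theorem sixteen_sq_le_f (n i : ℕ) (hn : 16 ≤ n) (hi : 7 ≤ i) :
    16 * n ^ 2 ≤ f i n :=
  (sixteen_sq_le_f_seven hn).trans
    (monotone_nat_of_le_succ (f := fun j => f j n) (fun j => f_le_f_succ j (by omega)) hi)
end
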